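/- Let n > 2k ≥ 2 and 0 < δ < η < 1. Suppose w : [0,η] → R is C^2 with w'(0) = 0, w(η) = 0, and ∂_r(r^{n-k}[w'(r)]^k) = C_{n,k} r^{n-1}(r²+δ²)^{-k} for 0 < r < η, where C_{n,k} > 0. Then there exists c_{n,k} > 0 (independent of δ) such that w'(ρ) ≥ c_{n,k} ρ^{-1} for all ρ ∈ [2δ, η], and consequently w(2δ) ≤ c_{n,k} (log(2δ) - log η). -/

import Mathlib

/-!
Integrating the ODE over `[ρ/2, ρ]`, where its right-hand side is at least
`C (ρ/2)^(n-1) / (2ρ²)^k` because `δ ≤ ρ/2`, and using `(r^(n-k) w'^k)(ρ/2) ≥ 0`, gives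
`ρ^(n-k) w'(ρ)^k ≥ C 2^(-(n+k)) ρ^(n-2k)`, i.e. `ρ w'(ρ) ≥ c := (C 2^(-(n+k)))^(1/k)`.
Integrating `w' ≥ c/ρ` from `2δ` to `η` then yields the logarithmic bound on `w(2δ)`.
-/

open Set

theorem ContinuousOn.nonneg_Icc_of_nonneg_Ioo {f : ℝ → ℝ} {a b : ℝ} (hab : a < b)
    (hf : ContinuousOn f (Icc a b)) (h : ∀ x ∈ Ioo a b, 0 ≤ f x) : ∀ x ∈ Icc a b, 0 ≤ f x := by
  rw [← closure_Ioo hab.ne] at hf ⊢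
  exact le_on_closure h continuousOn_const hf

theorem ode_rhs_ge {n k : ℕ} {C δ ρ x : ℝ} (hC : 0 ≤ C) (hδ : 0 < δ) (hδρ : 2 * δ ≤ ρ)
    (hx : x ∈ Icc (ρ / 2) ρ) :
    C * (ρ / 2) ^ (n - 1) / (2 * ρ ^ 2) ^ k ≤ C * x ^ (n - 1) * (x ^ 2 + δ ^ 2) ^ (-(k : ℝ)) := by
  have hx₀ : 0 ≤ ρ / 2 := by linarith
  have hsq : x ^ 2 + δ ^ 2 ≤ 2 * ρ ^ 2 := by nlinarith [hx.1, hx.2]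
  rw [Real.rpow_neg_natCast, zpow_neg, zpow_natCast, mul_div_assoc, mul_assoc, ← div_eq_mul_inv]
  gcongr
  · exact pow_nonneg (hx₀.trans hx.1) _
  · exact hx.1

theorem mul_pow_sub_le_of_hasDerivAt_ode {g : ℝ → ℝ} {n k : ℕ} {C δ ρ : ℝ} (hn : 0 < n)
    (hkn : 2 * k ≤ n) (hC : 0 ≤ C) (hδ : 0 < δ) (hδρ : 2 * δ ≤ ρ)
    (hg : ContinuousOn g (Icc (ρ / 2) ρ)) (hg₀ : 0 ≤ g (ρ / 2))
    (hg' : ∀ r ∈ Ioo (ρ / 2) ρ, HasDerivAt g (C * r ^ (n - 1) * (r ^ 2 + δ ^ 2) ^ (-(k : ℝ))) r) :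
    C / 2 ^ (n + k) * ρ ^ (n - 2 * k) ≤ g ρ := by
  have hρ : 0 < ρ := by linarith
  have hint : ∀ x ∈ interior (Icc (ρ / 2) ρ), x ∈ Ioo (ρ / 2) ρ := fun x hx => by
    rwa [interior_Icc] at hx
  have hmvt := (convex_Icc (ρ / 2) ρ).mul_sub_le_image_sub_of_le_deriv hg
    (fun x hx => (hg' x (hint x hx)).differentiableAt.differentiableWithinAt)
    (C := C * (ρ / 2) ^ (n - 1) / (2 * ρ ^ 2) ^ k)
    (fun x hx => (hg' x (hint x hx)).deriv ▸
      ode_rhs_ge hC hδ hδρ (Ioo_subset_Icc_self (hint x hx)))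
    (ρ / 2) ⟨le_rfl, by linarith⟩ ρ ⟨by linarith, le_rfl⟩ (by linarith)
  have hhalf : (ρ / 2) ^ (n - 1) * (ρ - ρ / 2) = (ρ / 2) ^ n := by
    rw [show ρ - ρ / 2 = ρ / 2 by ring, pow_sub_one_mul hn.ne']
  have hsplit : ρ ^ n = ρ ^ (n - 2 * k) * (ρ ^ 2) ^ k := by
    rw [← pow_mul, ← pow_add, Nat.sub_add_cancel hkn]
  have hval : C * (ρ / 2) ^ (n - 1) / (2 * ρ ^ 2) ^ k * (ρ - ρ / 2)
      = C / 2 ^ (n + k) * ρ ^ (n - 2 * k) := by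
    rw [mul_div_right_comm, mul_assoc, hhalf, div_pow, hsplit, mul_pow, pow_add]
    field_simp
  linarith

theorem rpow_inv_le_mul_of_mul_pow_le {n k : ℕ} {c ρ v : ℝ} (hk : k ≠ 0) (hkn : 2 * k ≤ n)
    (hc : 0 ≤ c) (hρ : 0 < ρ) (hv : 0 ≤ v) (h : c * ρ ^ (n - 2 * k) ≤ ρ ^ (n - k) * v ^ k) :
    c ^ (k⁻¹ : ℝ) ≤ ρ * v := by
  have hsplit : ρ ^ (n - k) * v ^ k = ρ ^ (n - 2 * k) * (ρ * v) ^ k := by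
    rw [mul_pow, show n - k = n - 2 * k + k by omega, pow_add]
    ring
  rw [hsplit, mul_comm c] at h
  have hc_le : c ≤ (ρ * v) ^ k := le_of_mul_le_mul_left h (by positivity)
  calc c ^ (k⁻¹ : ℝ) ≤ ((ρ * v) ^ k) ^ (k⁻¹ : ℝ) := by gcongr
    _ = ρ * v := Real.pow_rpow_inv_natCast (by positivity) hk

theorem mul_log_sub_log_le_sub_of_mul_inv_le_deriv {f f' : ℝ → ℝ} {a b c : ℝ} (ha : 0 < a)
    (hab : a ≤ b) (hf : ∀ x ∈ Icc a b, HasDerivAt f (f' x) x)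
    (hf' : ∀ x ∈ Ioo a b, c * x⁻¹ ≤ f' x) :
    c * (Real.log b - Real.log a) ≤ f b - f a := by
  have hderiv : ∀ x ∈ Icc a b,
      HasDerivAt (fun x => f x - c * Real.log x) (f' x - c * x⁻¹) x := fun x hx =>
    (hf x hx).sub ((Real.hasDerivAt_log (by linarith [hx.1])).const_mul c)
  have hmono : MonotoneOn (fun x => f x - c * Real.log x) (Icc a b) :=
    monotoneOn_of_hasDerivWithinAt_nonneg (convex_Icc a b)
      (fun x hx => (hderiv x hx).continuousAt.continuousWithinAt)
      (fun x hx => (hderiv x (interior_subset hx)).hasDerivWithinAt)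
      (fun x hx => sub_nonneg.2 (hf' x (by rwa [interior_Icc] at hx)))
  have := hmono (left_mem_Icc.2 hab) (right_mem_Icc.2 hab) hab
  simp only at this
  linarith

/-- Integration of the ODE in the nonexistence proof: if `n > 2k`, `0 < δ`, `2δ ≤ η < 1`,
and `w` satisfies `w'(0) = 0`, `w(η) = 0`, `w' ≥ 0`, and
`∂_r(r^{n-k}(w')^k) = C r^{n-1}(r²+δ²)^{-k}` on `(0,η)`, then there is `c > 0` independent
of `δ` with `w'(ρ) ≥ c ρ⁻¹` on `[2δ, η]` and hence `w(2δ) ≤ c (log(2δ) - log η)`. -/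
theorem stmt10 (n k : ℕ) (hk : 1 ≤ k) (hn : 2 * k < n) (C : ℝ) (hC : 0 < C) :
    ∃ c : ℝ, 0 < c ∧ ∀ (δ η : ℝ) (w w' : ℝ → ℝ),
      0 < δ → δ < η → η < 1 → 2 * δ ≤ η →
      (∀ r ∈ Set.Icc (0:ℝ) η, HasDerivAt w (w' r) r) →
      ContinuousOn w' (Set.Icc (0:ℝ) η) →
      (∀ r ∈ Set.Ioo (0:ℝ) η, 0 ≤ w' r) →
      w' 0 = 0 → w η = 0 →
      (∀ r ∈ Set.Ioo (0:ℝ) η,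
        HasDerivAt (fun ρ : ℝ => ρ ^ (n - k) * (w' ρ) ^ k)
          (C * r ^ (n - 1) * (r ^ 2 + δ ^ 2) ^ (-(k : ℝ))) r) →
      (∀ ρ ∈ Set.Icc (2 * δ) η, c * ρ⁻¹ ≤ w' ρ) ∧
        w (2 * δ) ≤ c * (Real.log (2 * δ) - Real.log η) := by
  refine ⟨(C / 2 ^ (n + k)) ^ (k⁻¹ : ℝ), by positivity, ?_⟩
  intro δ η w w' hδ hδη _ h2δη hw hw'_cont hw'_nonneg _ hwη hode
  have hw'_nonneg_Icc := hw'_cont.nonneg_Icc_of_nonneg_Ioo (hδ.trans hδη) hw'_nonneg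
  have hbound : ∀ ρ ∈ Icc (2 * δ) η, (C / 2 ^ (n + k)) ^ (k⁻¹ : ℝ) * ρ⁻¹ ≤ w' ρ := by
    intro ρ ⟨h2δρ, hρη⟩
    have hρ : 0 < ρ := by linarith
    have hsub : Icc (ρ / 2) ρ ⊆ Icc 0 η := Icc_subset_Icc (by linarith) hρη
    have hg := mul_pow_sub_le_of_hasDerivAt_ode (by omega) hn.le hC.le hδ h2δρ
      ((continuousOn_pow _).mul ((hw'_cont.mono hsub).pow k))
      (mul_nonneg (by positivity)
        (pow_nonneg (hw'_nonneg_Icc _ (hsub (left_mem_Icc.2 (by linarith)))) k))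
      (fun r hr => hode r ⟨by linarith [hr.1], by linarith [hr.2]⟩)
    rw [mul_inv_le_iff₀ hρ, mul_comm]
    exact rpow_inv_le_mul_of_mul_pow_le (by omega) hn.le (by positivity) hρ
      (hw'_nonneg_Icc ρ (hsub (right_mem_Icc.2 (by linarith)))) hg
  refine ⟨hbound, ?_⟩
  have := mul_log_sub_log_le_sub_of_mul_inv_le_deriv (by linarith) h2δη
    (fun x hx => hw x ⟨by linarith [hx.1], hx.2⟩) (fun x hx => hbound x (Ioo_subset_Icc_self hx))
  linarith
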